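/- Let n ≥ 1, let p₁, …, p_n ∈ ℝ³ and k₁, …, k_n > 0, and set k_c := Σᵢ kᵢ, p_c := (1/k_c) Σᵢ kᵢ pᵢ, and M := Σᵢ kᵢ (pᵢ − p_c)(pᵢ − p_c)ᵀ. Let R, R̂ ∈ SO(3), p ∈ ℝ³, and define yᵢ := Rᵀ(pᵢ − p), y_c := Rᵀ(p_c − p), and R̃ := R R̂ᵀ. Then (1/2) Σᵢ kᵢ ‖(pᵢ − p_c) − R̂ (yᵢ − y_c)‖² = tr((I₃ − R̃) M). -/

import Mathlib

open Matrix

/-- `SO(3)`: real 3×3 matrices with `Rᵀ R = I₃` and `det R = 1`. -/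
def SO3 (R : Matrix (Fin 3) (Fin 3) ℝ) : Prop := Rᵀ * R = 1 ∧ R.det = 1

/-!
Centering cancels the unknown position: `yᵢ - y_c = Rᵀ (pᵢ - p_c)`, so each residual is
`qᵢ - R̃ᵀ qᵢ` with `qᵢ = pᵢ - p_c`. As `R̃ᵀ` is an isometry, `‖q - R̃ᵀ q‖² = 2 (‖q‖² - qᵀ R̃ q)
= 2 tr((I - R̃) q qᵀ)`, and summing with the weights `kᵢ` gives `2 tr((I - R̃) M)`.
-/

namespace Matrix

variable {m α : Type*} [Fintype m] [DecidableEq m] [CommRing α]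

lemma dotProduct_self_sub_transpose_mulVec {Q : Matrix m m α}
    (hQ : Q ∈ orthogonalGroup m α) (v : m → α) :
    (v - Qᵀ *ᵥ v) ⬝ᵥ (v - Qᵀ *ᵥ v) = 2 * ((1 - Q) * vecMulVec v v).trace := by
  have hQQt : Q * Qᵀ = 1 := (mem_orthogonalGroup_iff m α).1 hQ
  have hnorm : (Qᵀ *ᵥ v) ⬝ᵥ (Qᵀ *ᵥ v) = v ⬝ᵥ v := by
    rw [mulVec_transpose, ← dotProduct_mulVec, mulVec_vecMul, hQQt, one_mulVec]
  have hcross : (Qᵀ *ᵥ v) ⬝ᵥ v = v ⬝ᵥ (Q *ᵥ v) := by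
    rw [mulVec_transpose, dotProduct_mulVec]
  rw [mul_vecMulVec, trace_vecMulVec, sub_mulVec, one_mulVec, sub_dotProduct,
    sub_dotProduct, dotProduct_sub, dotProduct_sub, hnorm, hcross, dotProduct_comm v (Qᵀ *ᵥ v),
    hcross, dotProduct_comm (Q *ᵥ v) v]
  ring

lemma sum_mul_dotProduct_self_sub_transpose_mulVec {ι : Type*} [Fintype ι] {Q : Matrix m m α}
    (hQ : Q ∈ orthogonalGroup m α) (k : ι → α) (q : ι → m → α) :
    ∑ i, k i * ((q i - Qᵀ *ᵥ q i) ⬝ᵥ (q i - Qᵀ *ᵥ q i)) =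
      2 * ((1 - Q) * ∑ i, k i • vecMulVec (q i) (q i)).trace := by
  simp only [dotProduct_self_sub_transpose_mulVec hQ, trace_sum, Finset.mul_sum,
    Matrix.mul_smul, trace_smul, smul_eq_mul, mul_left_comm]

end Matrix

theorem cost_function_eq_trace
    (n : ℕ) (p : Fin n → Fin 3 → ℝ) (k : Fin n → ℝ)
    (pc : Fin 3 → ℝ)
    (M : Matrix (Fin 3) (Fin 3) ℝ)
    (hM : M = ∑ i, k i • vecMulVec (p i - pc) (p i - pc))
    (R Rh : Matrix (Fin 3) (Fin 3) ℝ) (hR : SO3 R) (hRh : SO3 Rh)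
    (pv : Fin 3 → ℝ)
    (y : Fin n → Fin 3 → ℝ) (hy : ∀ i, y i = Rᵀ.mulVec (p i - pv))
    (yc : Fin 3 → ℝ) (hyc : yc = Rᵀ.mulVec (pc - pv))
    (Rt : Matrix (Fin 3) (Fin 3) ℝ) (hRt : Rt = R * Rhᵀ) :
    (1/2 : ℝ) * ∑ i, k i *
        ((p i - pc - Rh.mulVec (y i - yc)) ⬝ᵥ (p i - pc - Rh.mulVec (y i - yc))) =
      ((1 - Rt) * M).trace := by
  have hRt_orth : Rt ∈ orthogonalGroup (Fin 3) ℝ := by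
    rw [hRt]
    refine mul_mem ((mem_orthogonalGroup_iff' (Fin 3) ℝ).2 hR.1)
      ((mem_orthogonalGroup_iff (Fin 3) ℝ).2 ?_)
    rw [transpose_transpose, hRh.1]
  have hresidual : ∀ i, Rh *ᵥ (y i - yc) = Rtᵀ *ᵥ (p i - pc) := by
    intro i
    rw [hy, hyc, ← mulVec_sub, sub_sub_sub_cancel_right, mulVec_mulVec, hRt, transpose_mul,
      transpose_transpose]
  simp only [hresidual]
  rw [sum_mul_dotProduct_self_sub_transpose_mulVec hRt_orth, hM]
  ring
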